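/- arXiv:0903.0331 — 8 statements merged into one kernel-verified Lean document; each statement's English description precedes it below -/
import Mathlib

section
/- Let K > 0 and define the piecewise linear map F(X,Y) = (Y + 3·max(0,X) − 3·max(X,Y), X + 3·max(0,Y) − 3·max(X,Y)) on ℝ². If (X,Y) satisfies max(3X, 3Y, 0) = X + Y + K, then F(X,Y) also satisfies max(3X̄, 3Ȳ, 0) = X̄ + Ȳ + K. That is, the ultradiscrete Hesse map preserves the cycle of the tropical cubic curve. -/
/-! The cycle is the level set `{hesseLevel = K}` of a tropical polynomial which the map `F`
leaves invariant on all of `ℝ²`. Invariance is checked region by region: on each of the six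
regions cut out by the relative order of `0`, `X`, `Y` both `F` and `hesseLevel` are linear. -/

def hesseLevel (p : ℝ × ℝ) : ℝ :=
  max (max (3 * p.1) (3 * p.2)) 0 - (p.1 + p.2)

def hesseMap (p : ℝ × ℝ) : ℝ × ℝ :=
  (p.2 + 3 * max 0 p.1 - 3 * max p.1 p.2, p.1 + 3 * max 0 p.2 - 3 * max p.1 p.2)

theorem hesseLevel_hesseMap (p : ℝ × ℝ) : hesseLevel (hesseMap p) = hesseLevel p := by
  simp only [hesseLevel, hesseMap, max_def]
  split_ifs <;> linarith

theorem ultradiscrete_hesse_preserves_cycle_general (K X Y : ℝ)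
    (h : max (max (3 * X) (3 * Y)) 0 = X + Y + K) :
    max (max (3 * (Y + 3 * max 0 X - 3 * max X Y)) (3 * (X + 3 * max 0 Y - 3 * max X Y))) 0 =
      (Y + 3 * max 0 X - 3 * max X Y) + (X + 3 * max 0 Y - 3 * max X Y) + K := by
  have hlevel := hesseLevel_hesseMap (X, Y)
  simp only [hesseLevel, hesseMap] at hlevel
  linarith

theorem ultradiscrete_hesse_preserves_cycle (K X Y : ℝ) (hK : 0 < K)
    (h : max (max (3 * X) (3 * Y)) 0 = X + Y + K) :
    max (max (3 * (Y + 3 * max 0 X - 3 * max X Y)) (3 * (X + 3 * max 0 Y - 3 * max X Y))) 0 =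
      (Y + 3 * max 0 X - 3 * max X Y) + (X + 3 * max 0 Y - 3 * max X Y) + K :=
  ultradiscrete_hesse_preserves_cycle_general K X Y h
end

section
/- Let K > 0. The quantity K(X,Y) := 3·max(X, Y, 0) − X − Y is a conserved quantity of the map F(X,Y) = (Y + 3·max(0,X) − 3·max(X,Y), X + 3·max(0,Y) − 3·max(X,Y)); i.e., K(F(X,Y)) = K(X,Y) for all (X,Y) on the curve max(3X,3Y,0) = X+Y+K. -/
def hesseInvariant (p : ℝ × ℝ) : ℝ :=
  3 * max (max p.1 p.2) 0 - p.1 - p.2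

lemma hesseMap_swap (p : ℝ × ℝ) : hesseMap p.swap = (hesseMap p).swap := by
  simp only [hesseMap, Prod.fst_swap, Prod.snd_swap, Prod.swap_prod_mk, max_comm p.2 p.1]

lemma hesseInvariant_swap (p : ℝ × ℝ) : hesseInvariant p.swap = hesseInvariant p := by
  simp only [hesseInvariant, Prod.fst_swap, Prod.snd_swap, max_comm p.2 p.1]
  ring

lemma hesseInvariant_hesseMap_of_le {x y : ℝ} (hyx : y ≤ x) :
    hesseInvariant (hesseMap (x, y)) = hesseInvariant (x, y) := by
  rcases le_total 0 y with hy | hy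
  · have hF : hesseMap (x, y) = (y, 3 * y - 2 * x) := by
      rw [hesseMap, max_eq_left hyx, max_eq_right (hy.trans hyx), max_eq_right hy]
      ext <;> ring
    simp only [hF, hesseInvariant]
    rw [max_eq_left (by linarith : 3 * y - 2 * x ≤ y), max_eq_left hy, max_eq_left hyx,
      max_eq_left (hy.trans hyx)]
    ring
  rcases le_total 0 x with hx | hx
  · have hF : hesseMap (x, y) = (y, -2 * x) := by
      rw [hesseMap, max_eq_left hyx, max_eq_right hx, max_eq_left hy]
      ext <;> ring
    simp only [hF, hesseInvariant]
    rw [max_eq_right (max_le hy (by linarith) : max y (-2 * x) ≤ 0), max_eq_left hyx,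
      max_eq_left hx]
    ring
  · have hF : hesseMap (x, y) = (y - 3 * x, -2 * x) := by
      rw [hesseMap, max_eq_left hyx, max_eq_left hx, max_eq_left hy]
      ext <;> ring
    simp only [hF, hesseInvariant]
    rw [max_eq_right (by linarith : y - 3 * x ≤ -2 * x), max_eq_left (by linarith : 0 ≤ -2 * x),
      max_eq_left hyx, max_eq_right hx]
    ring

theorem hesseInvariant_hesseMap (p : ℝ × ℝ) : hesseInvariant (hesseMap p) = hesseInvariant p := by
  obtain ⟨x, y⟩ := p
  rcases le_total y x with h | h
  · exact hesseInvariant_hesseMap_of_le h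
  · rw [← hesseInvariant_swap, ← hesseMap_swap]
    exact (hesseInvariant_hesseMap_of_le h).trans (hesseInvariant_swap (x, y))

theorem ultradiscrete_hesse_conserved_quantity_general (X Y : ℝ) :
    3 * max (max (Y + 3 * max 0 X - 3 * max X Y) (X + 3 * max 0 Y - 3 * max X Y)) 0
      - (Y + 3 * max 0 X - 3 * max X Y) - (X + 3 * max 0 Y - 3 * max X Y)
    = 3 * max (max X Y) 0 - X - Y :=
  hesseInvariant_hesseMap (X, Y)

theorem ultradiscrete_hesse_conserved_quantity (K X Y : ℝ) (hK : 0 < K)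
    (h : max (max (3 * X) (3 * Y)) 0 = X + Y + K) :
    3 * max (max (Y + 3 * max 0 X - 3 * max X Y) (X + 3 * max 0 Y - 3 * max X Y)) 0
      - (Y + 3 * max 0 X - 3 * max X Y) - (X + 3 * max 0 Y - 3 * max X Y)
    = 3 * max (max X Y) 0 - X - Y :=
  ultradiscrete_hesse_conserved_quantity_general X Y
end

section
/- Let K > 0 and suppose (X,Y) lies on the edge E₁ of the tropical cubic curve, i.e., X + Y + K = 0 with −K ≤ X ≤ 0 and −K ≤ Y ≤ 0, and X ≤ Y. Then the image under the map F(X,Y) = (Y − 3·max(X,Y), X − 3·max(X,Y)) is the point (−2Y, X − 3Y), which lies on the edge E₂, i.e., satisfies 3X̄ = X̄ + Ȳ + K with 0 ≤ X̄ ≤ K. -/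
theorem hesse_map_E1_to_E2_general (K X Y : ℝ)
    (hE1 : X + Y + K = 0) (hY2 : Y ≤ 0)
    (hXY : X ≤ Y) :
    (Y - 3 * max X Y, X - 3 * max X Y) = (-2 * Y, X - 3 * Y) ∧
    3 * (-2 * Y) = (-2 * Y) + (X - 3 * Y) + K ∧
    0 ≤ -2 * Y ∧ -2 * Y ≤ K := by
  rw [max_eq_right hXY]
  exact ⟨Prod.ext (by ring) rfl, by linarith, by linarith, by linarith⟩

theorem hesse_map_E1_to_E2 (K X Y : ℝ) (hK : 0 < K)
    (hE1 : X + Y + K = 0) (hX1 : -K ≤ X) (hX2 : X ≤ 0) (hY1 : -K ≤ Y) (hY2 : Y ≤ 0)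
    (hXY : X ≤ Y) :
    (Y - 3 * max X Y, X - 3 * max X Y) = (-2 * Y, X - 3 * Y) ∧
    3 * (-2 * Y) = (-2 * Y) + (X - 3 * Y) + K ∧
    0 ≤ -2 * Y ∧ -2 * Y ≤ K :=
  hesse_map_E1_to_E2_general K X Y hE1 hY2 hXY
end

section
/- Let K > 0 and define the Abel–Jacobi coordinate on the tropical cubic cycle: for P on edge E₁ parametrized as P = (−(1−s)K, −sK) with 0 ≤ s ≤ 1, set η(P) = (1+s)K. For 0 ≤ s ≤ 1/2 (so X ≤ Y), the image P̄ = (Y − 3Y, X − 3Y) = (2sK, (−1+4s)K) lies on edge E₂ and satisfies η(P̄) = 2η(P) − 3K, i.e., η(P̄) ≡ 2η(P) mod 3K. -/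
theorem abel_jacobi_duplication_E1_general (K s : ℝ) (hs0 : 0 ≤ s) (hs : s ≤ 1 / 2) :
    let X : ℝ := -(1 - s) * K
    let Y : ℝ := -s * K
    -- the image point P̄ = (Y − 3Y, X − 3Y)
    (Y - 3 * Y, X - 3 * Y) = (2 * s * K, (-1 + 4 * s) * K) ∧
    -- P̄ lies on edge E₂ : 3X̄ = X̄ + Ȳ + K, i.e. P̄ = V₂ + t(V₃ − V₂) with t = 2s ∈ [0,1]
    3 * (2 * s * K) = (2 * s * K) + ((-1 + 4 * s) * K) + K ∧
    (2 * s * K, (-1 + 4 * s) * K) = ((0 : ℝ) + (2 * s) * K, -K + (2 * s) * (2 * K)) ∧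
    0 ≤ 2 * s ∧ 2 * s ≤ 1 ∧
    -- η(P̄) ≡ 2η(P) mod 3K, where η(P̄) = 2K + (2s)K and η(P) = (1+s)K
    ∃ m : ℤ, 2 * K + (2 * s) * K = 2 * ((1 + s) * K) + (m : ℝ) * (3 * K) := by
  refine ⟨Prod.ext (by ring) (by ring), by ring, Prod.ext (by ring) (by ring),
    by linarith, by linarith, ?_⟩
  -- η(P̄) = 2η(P) holds exactly, so no multiple of 3K is needed.
  exact ⟨0, by push_cast; ring⟩

theorem abel_jacobi_duplication_E1 (K s : ℝ) (hK : 0 < K) (hs0 : 0 ≤ s) (hs : s ≤ 1 / 2) :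
    let X : ℝ := -(1 - s) * K
    let Y : ℝ := -s * K
    -- the image point P̄ = (Y − 3Y, X − 3Y)
    (Y - 3 * Y, X - 3 * Y) = (2 * s * K, (-1 + 4 * s) * K) ∧
    -- P̄ lies on edge E₂ : 3X̄ = X̄ + Ȳ + K, i.e. P̄ = V₂ + t(V₃ − V₂) with t = 2s ∈ [0,1]
    3 * (2 * s * K) = (2 * s * K) + ((-1 + 4 * s) * K) + K ∧
    (2 * s * K, (-1 + 4 * s) * K) = ((0 : ℝ) + (2 * s) * K, -K + (2 * s) * (2 * K)) ∧
    0 ≤ 2 * s ∧ 2 * s ≤ 1 ∧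
    -- η(P̄) ≡ 2η(P) mod 3K, where η(P̄) = 2K + (2s)K and η(P) = (1+s)K
    ∃ m : ℤ, 2 * K + (2 * s) * K = 2 * ((1 + s) * K) + (m : ℝ) * (3 * K) :=
  abel_jacobi_duplication_E1_general K s hs0 hs
end

section
/- Let K > 0 and define X(u) = S(u − K; 3K, 2K, 9K/2) and Y(u) = S(u − 2K; 3K, K, 9K/2), where S(u; α, β, θ) = Θ(u/α; θ) − Θ((u−β)/α; θ) and Θ(u; θ) = −θ(frac(u) − 1/2)². Then for every u ∈ ℝ, the point (X(u), Y(u)) lies on the tropical cubic cycle: max(3X(u), 3Y(u), 0) = X(u) + Y(u) + K. -/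
noncomputable def uTheta (θ u : ℝ) : ℝ := -θ * (Int.fract u - 1 / 2) ^ 2

noncomputable def Sfn (α β θ u : ℝ) : ℝ := uTheta θ (u / α) - uTheta θ ((u - β) / α)

/-!
Both coordinates are `3K`-periodic in `u` and, since the shifts in each `S` add up to the
period `3K`, each is a difference `Θ(x - c) - Θ(x - 1)` with `x = u / 3K`. Such a difference of
two parabolas is affine in `w = fract x` on either side of `c`, so with breakpoints `1/3` (for `X`)
and `2/3` (for `Y`) the point `(X, Y)` runs linearly along the three edges of the cycle: from
`(K, K)` to `(-K, 0)`, on to `(0, -K)`, and back to `(K, K)`.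
-/

namespace Int

variable {x c : ℝ}

theorem fract_sub_of_lt_of_le_one (h : fract x < c) (hc : c ≤ 1) :
    fract (x - c) = fract x - c + 1 := by
  rw [fract_eq_iff]
  refine ⟨by linarith [fract_nonneg x], by linarith, ⌊x⌋ - 1, ?_⟩
  push_cast
  linarith [self_sub_fract x]

theorem fract_sub_of_le_of_nonneg (h : c ≤ fract x) (hc : 0 ≤ c) :
    fract (x - c) = fract x - c := by
  rw [fract_eq_iff]
  refine ⟨by linarith, by linarith [fract_lt_one x], ⌊x⌋, ?_⟩
  linarith [self_sub_fract x]

end Int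

theorem uTheta_sub_uTheta (θ a b : ℝ) :
    uTheta θ a - uTheta θ b =
      θ * (Int.fract b - Int.fract a) * (Int.fract a + Int.fract b - 1) := by
  unfold uTheta
  ring

theorem uTheta_sub_sub_uTheta_sub_one (θ x : ℝ) {c : ℝ} (hc₀ : 0 ≤ c) (hc₁ : c ≤ 1) :
    uTheta θ (x - c) - uTheta θ (x - 1) =
      if Int.fract x < c then θ * (c - 1) * (2 * Int.fract x - c)
      else θ * c * (2 * Int.fract x - c - 1) := by
  rw [uTheta_sub_uTheta, Int.fract_sub_one]
  split_ifs with h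
  · rw [Int.fract_sub_of_lt_of_le_one h hc₁]
    ring
  · rw [Int.fract_sub_of_le_of_nonneg (not_lt.1 h) hc₀]
    ring

theorem Sfn_sub_of_add_eq {α β γ : ℝ} (hα : α ≠ 0) (h : β + γ = α) (θ u : ℝ) :
    Sfn α β θ (u - γ) = uTheta θ (u / α - γ / α) - uTheta θ (u / α - 1) := by
  rw [Sfn, sub_div, sub_sub, add_comm γ, h, sub_div _ α, div_self hα]

theorem max_eq_of_tropicalCycle_param {K w : ℝ} (hK : 0 < K) (hw₀ : 0 ≤ w) (hw₁ : w < 1) :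
    let X := if w < 1 / 3 then K - 6 * K * w else 3 * K * w - 2 * K
    let Y := if w < 2 / 3 then K - 3 * K * w else 6 * K * w - 5 * K
    max (max (3 * X) (3 * Y)) 0 = X + Y + K := by
  intro X Y
  rcases lt_or_ge w (1 / 3) with h₁ | h₁
  · have hX : X = K - 6 * K * w := if_pos h₁
    have hY : Y = K - 3 * K * w := if_pos (by linarith)
    rw [max_eq_right (by nlinarith : 3 * X ≤ 3 * Y), max_eq_left (by nlinarith : 0 ≤ 3 * Y)]
    linarith
  rcases lt_or_ge w (2 / 3) with h₂ | h₂
  · have hX : X = 3 * K * w - 2 * K := if_neg (not_lt.2 h₁)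
    have hY : Y = K - 3 * K * w := if_pos h₂
    rw [max_eq_right (max_le (by nlinarith : 3 * X ≤ 0) (by nlinarith : 3 * Y ≤ 0))]
    linarith
  · have hX : X = 3 * K * w - 2 * K := if_neg (not_lt.2 h₁)
    have hY : Y = 6 * K * w - 5 * K := if_neg (not_lt.2 h₂)
    rw [max_eq_left (by nlinarith : 3 * Y ≤ 3 * X), max_eq_left (by nlinarith : 0 ≤ 3 * X)]
    linarith

theorem solution_on_tropical_cycle (K : ℝ) (hK : 0 < K) (u : ℝ) :
    let X := Sfn (3 * K) (2 * K) (9 * K / 2) (u - K)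
    let Y := Sfn (3 * K) K (9 * K / 2) (u - 2 * K)
    max (max (3 * X) (3 * Y)) 0 = X + Y + K := by
  have h3K : 3 * K ≠ 0 := by positivity
  set w := Int.fract (u / (3 * K))
  have hX : Sfn (3 * K) (2 * K) (9 * K / 2) (u - K) =
      if w < 1 / 3 then K - 6 * K * w else 3 * K * w - 2 * K := by
    rw [Sfn_sub_of_add_eq h3K (by ring), show K / (3 * K) = 1 / 3 by field_simp,
      uTheta_sub_sub_uTheta_sub_one _ _ (by norm_num) (by norm_num)]
    split_ifs <;> ring
  have hY : Sfn (3 * K) K (9 * K / 2) (u - 2 * K) =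
      if w < 2 / 3 then K - 3 * K * w else 6 * K * w - 5 * K := by
    rw [Sfn_sub_of_add_eq h3K (by ring), show 2 * K / (3 * K) = 2 / 3 by field_simp,
      uTheta_sub_sub_uTheta_sub_one _ _ (by norm_num) (by norm_num)]
    split_ifs <;> ring
  rw [hX, hY]
  exact max_eq_of_tropicalCycle_param hK (Int.fract_nonneg _) (Int.fract_lt_one _)
end

section
/- Let x, y ∈ ℝ with x³ ≠ y³, x³ + y³ + 1 = 3μxy for some μ ∈ ℝ. Define x̄ = (1 − x³)y/(x³ − y³) and ȳ = (1 − y³)x/(y³ − x³). Then x̄³ + ȳ³ + 1 = 3μ·x̄·ȳ. That is, the duplication map preserves the Hesse cubic curve x³ + y³ + 1 = 3μxy. -/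
section HesseCubic

variable {K : Type*} [Field K]

def hesseCubic (μ x y : K) : K := x ^ 3 + y ^ 3 + 1 - 3 * μ * x * y

theorem hesseCubic_duplicate (μ : K) {x y : K} (hxy : x ^ 3 ≠ y ^ 3) :
    hesseCubic μ ((1 - x ^ 3) * y / (x ^ 3 - y ^ 3)) ((1 - y ^ 3) * x / (y ^ 3 - x ^ 3)) =
      -((1 - x ^ 3) * (1 - y ^ 3) / (x ^ 3 - y ^ 3) ^ 2) * hesseCubic μ x y := by
  have hxy_sub : x ^ 3 - y ^ 3 ≠ 0 := sub_ne_zero.mpr hxy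
  unfold hesseCubic
  field_simp
  ring

end HesseCubic

theorem hesse_duplication_preserves_curve (x y μ : ℝ) (hxy : x ^ 3 ≠ y ^ 3)
    (h : x ^ 3 + y ^ 3 + 1 = 3 * μ * x * y) :
    ((1 - x ^ 3) * y / (x ^ 3 - y ^ 3)) ^ 3 + ((1 - y ^ 3) * x / (y ^ 3 - x ^ 3)) ^ 3 + 1 =
      3 * μ * ((1 - x ^ 3) * y / (x ^ 3 - y ^ 3)) * ((1 - y ^ 3) * x / (y ^ 3 - x ^ 3)) := by
  have hxy_on_curve : hesseCubic μ x y = 0 := sub_eq_zero.mpr h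
  refine sub_eq_zero.mp (?_ : hesseCubic μ _ _ = 0)
  rw [hesseCubic_duplicate μ hxy, hxy_on_curve, mul_zero]
end

section
/- In homogeneous coordinates, the duplication map on the Hesse cubic is 2·[x₀:x₁:x₂] = [x₁(x₂³−x₀³) : x₀(x₁³−x₂³) : x₂(x₀³−x₁³)]. Verify: if x₀³ + x₁³ + x₂³ = 3μ x₀x₁x₂, then setting y₀ = x₁(x₂³−x₀³), y₁ = x₀(x₁³−x₂³), y₂ = x₂(x₀³−x₁³), one has y₀³ + y₁³ + y₂³ = 3μ y₀y₁y₂. -/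
/-! The duplication map multiplies the Hesse form by `D = (x₀³ - x₁³)(x₁³ - x₂³)(x₂³ - x₀³)`.
Indeed `y₀y₁y₂ = D x₀x₁x₂`, and with `a, b, c` the cubes of the coordinates the cubes of the
`yᵢ` are `b(c - a)³`, `a(b - c)³`, `c(a - b)³`, whose sum is `(a + b + c) D` by a classical
identity. -/

section

variable {R : Type*} [CommRing R]

theorem mul_sub_cube_cyclic_sum (a b c : R) :
    a * (b - c) ^ 3 + b * (c - a) ^ 3 + c * (a - b) ^ 3 =
      (a + b + c) * (a - b) * (b - c) * (c - a) := by
  ring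

def hesseForm (μ x₀ x₁ x₂ : R) : R :=
  x₀ ^ 3 + x₁ ^ 3 + x₂ ^ 3 - 3 * μ * x₀ * x₁ * x₂

theorem hesseForm_duplication (μ x₀ x₁ x₂ : R) :
    hesseForm μ (x₁ * (x₂ ^ 3 - x₀ ^ 3)) (x₀ * (x₁ ^ 3 - x₂ ^ 3)) (x₂ * (x₀ ^ 3 - x₁ ^ 3)) =
      (x₀ ^ 3 - x₁ ^ 3) * (x₁ ^ 3 - x₂ ^ 3) * (x₂ ^ 3 - x₀ ^ 3) * hesseForm μ x₀ x₁ x₂ := by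
  unfold hesseForm
  linear_combination mul_sub_cube_cyclic_sum (x₀ ^ 3) (x₁ ^ 3) (x₂ ^ 3)

end

theorem hesse_duplication_homogeneous {R : Type*} [CommRing R] (μ x₀ x₁ x₂ : R)
    (h : x₀ ^ 3 + x₁ ^ 3 + x₂ ^ 3 = 3 * μ * x₀ * x₁ * x₂) :
    (x₁ * (x₂ ^ 3 - x₀ ^ 3)) ^ 3 + (x₀ * (x₁ ^ 3 - x₂ ^ 3)) ^ 3 + (x₂ * (x₀ ^ 3 - x₁ ^ 3)) ^ 3 =
      3 * μ * (x₁ * (x₂ ^ 3 - x₀ ^ 3)) * (x₀ * (x₁ ^ 3 - x₂ ^ 3)) * (x₂ * (x₀ ^ 3 - x₁ ^ 3)) := by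
  have hx : hesseForm μ x₀ x₁ x₂ = 0 := sub_eq_zero.mpr h
  have hy := hesseForm_duplication μ x₀ x₁ x₂
  rw [hx, mul_zero] at hy
  exact sub_eq_zero.mp hy
end

section
/- For the real duplication map x̄ = (1−x³)y/(x³−y³), ȳ = (1−y³)x/(y³−x³) on the Hesse cubic: if x̄ > 0 and ȳ > 0 for real (x,y) with x³ ≠ y³, then a contradiction arises; i.e., the image of the map applied to any real point never lies in the open first quadrant. -/
/-!
Swapping `x` and `y` swaps the two components, so we may assume `y < x`. The sign of the
denominators then forces `(1 - x³) y > 0` and `(1 - y³) x < 0`. If `y > 0`, then `x > y > 0`,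
so `x³ < 1 < y³`, contradicting `y < x`. If `y < 0`, then `x³ > 1`, so `x > 0` and `y³ > 1`,
contradicting `y < 0`. Only the monotonicity of the cube and `0³ ≤ 1` enter.
-/

lemma StrictMono.not_mul_pos_and_mul_neg {f : ℝ → ℝ} (hf : StrictMono f) (hf0 : f 0 ≤ 1)
    {x y : ℝ} (hyx : y < x) : ¬ (0 < (1 - f x) * y ∧ (1 - f y) * x < 0) := by
  rintro ⟨hleft, hright⟩
  rcases lt_trichotomy y 0 with hy | rfl | hy
  · have hfx : 1 < f x := by nlinarith
    have hx : 0 < x := hf.lt_iff_lt.mp (by linarith)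
    have hfy : 1 < f y := by nlinarith
    exact absurd (hf.lt_iff_lt.mp (by linarith : f 0 < f y)) hy.not_gt
  · simp at hleft
  · have hfx : f x < 1 := by nlinarith
    have hfy : 1 < f y := by nlinarith
    linarith [hf hyx]

lemma hesse_map_not_pos_of_lt {x y : ℝ} (hyx : y < x) :
    ¬ (0 < (1 - x ^ 3) * y / (x ^ 3 - y ^ 3) ∧ 0 < (1 - y ^ 3) * x / (y ^ 3 - x ^ 3)) := by
  have hcube : StrictMono fun t : ℝ => t ^ 3 := Odd.strictMono_pow ⟨1, rfl⟩
  have hden : y ^ 3 < x ^ 3 := hcube hyx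
  rintro ⟨hleft, hright⟩
  refine hcube.not_mul_pos_and_mul_neg (by norm_num) hyx ⟨?_, ?_⟩
  · exact (div_pos_iff_of_pos_right (sub_pos.mpr hden)).mp hleft
  · rcases div_pos_iff.mp hright with ⟨_, hneg⟩ | ⟨hnum, _⟩
    · linarith
    · exact hnum

theorem hesse_map_avoids_first_quadrant :
    ¬ ∃ x y : ℝ, x ^ 3 ≠ y ^ 3 ∧
      0 < (1 - x ^ 3) * y / (x ^ 3 - y ^ 3) ∧
      0 < (1 - y ^ 3) * x / (y ^ 3 - x ^ 3) := by
  rintro ⟨x, y, hne, hleft, hright⟩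
  rcases lt_or_gt_of_ne (fun h : x = y => hne (h ▸ rfl)) with hxy | hyx
  · exact hesse_map_not_pos_of_lt hxy ⟨hright, hleft⟩
  · exact hesse_map_not_pos_of_lt hyx ⟨hleft, hright⟩
end
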